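/- Let G be a group and μ ∈ G an element that normally generates G (i.e., the smallest normal subgroup containing μ is G). Then the subgroup generated by all commutators [g, μ] for g ∈ G, taken as a normal subgroup, equals the commutator subgroup [G, G]. -/

import Mathlib

/-!
Modulo `N`, the normal closure of the commutators `⁅g, μ⁆`, the image of `μ` is central; since
it normally generates the quotient, the centre is everything, so `G ⧸ N` is commutative and
`N` contains `[G, G]`.
-/

open scoped commutatorElement

namespace Subgroup

variable {G : Type*} [Group G]

theorem isMulCommutative_of_normalClosure_singleton_eq_top {z : G} (hz : z ∈ center G)
    (h : normalClosure {z} = ⊤) : IsMulCommutative G :=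
  center_eq_top_iff.mp <| top_le_iff.mp <|
    h ▸ normalClosure_le_normal (Set.singleton_subset_iff.mpr hz)

theorem normalClosure_singleton_map_eq_top {H : Type*} [Group H] {f : G →* H}
    (hf : Function.Surjective f) {μ : G} (hμ : normalClosure {μ} = ⊤) :
    normalClosure {f μ} = ⊤ := by
  rw [← Set.image_singleton, ← map_normalClosure _ _ hf, hμ, map_top_of_surjective _ hf]

theorem mk_mem_center_of_commutatorElement_mem {N : Subgroup G} [N.Normal] {μ : G}
    (hN : ∀ g : G, ⁅g, μ⁆ ∈ N) : (μ : G ⧸ N) ∈ center (G ⧸ N) := by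
  rw [mem_center_iff]
  intro z
  induction z using QuotientGroup.induction_on with
  | H g =>
    rw [← commutatorElement_eq_one_iff_mul_comm]
    exact (QuotientGroup.eq_one_iff _).mpr (hN g)

theorem commutator_le_of_commutatorElement_mem {N : Subgroup G} [N.Normal] {μ : G}
    (hμ : normalClosure {μ} = ⊤) (hN : ∀ g : G, ⁅g, μ⁆ ∈ N) : _root_.commutator G ≤ N :=
  Normal.quotient_commutative_iff_commutator_le.mp <|
    isMulCommutative_of_normalClosure_singleton_eq_top (mk_mem_center_of_commutatorElement_mem hN)
      (normalClosure_singleton_map_eq_top (QuotientGroup.mk'_surjective N) hμ)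

end Subgroup

/-- If `μ` normally generates `G`, then the normal closure of the set of commutators
`[g, μ]` for `g ∈ G` equals the commutator subgroup `[G, G]`. -/
theorem normalClosure_commutators_eq_commutator {G : Type*} [Group G] (μ : G)
    (hμ : Subgroup.normalClosure {μ} = ⊤) :
    Subgroup.normalClosure {c : G | ∃ g : G, c = ⁅g, μ⁆} = commutator G := by
  apply le_antisymm
  · refine Subgroup.normalClosure_le_normal ?_
    rintro c ⟨g, rfl⟩
    exact Subgroup.commutator_mem_commutator (Subgroup.mem_top g) (Subgroup.mem_top μ)
  · exact Subgroup.commutator_le_of_commutatorElement_mem hμ fun g ↦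
      Subgroup.subset_normalClosure ⟨g, rfl⟩
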